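/- arXiv:2602.15710 — 3 statements merged into one kernel-verified Lean document; each statement's English description precedes it below -/
import Mathlib

section
/- Fejér monotonicity of the inexact Bregman proximal point algorithm: suppose T is monotone, z* ∈ zer T ∩ dom Φ, and the iterates satisfy wᵏ ∈ T(pᵏ), ∇Φ(z^{k+1}) = ∇Φ(zᵏ) − σₖ wᵏ, and D_Φ(pᵏ, z^{k+1}) ≤ ρₖ D_Φ(pᵏ, zᵏ) with 0 ≤ ρₖ ≤ ρ < 1. Then D_Φ(z*, z^{k+1}) ≤ D_Φ(z*, zᵏ) − σₖ⟨wᵏ, pᵏ − z*⟩ − (1 − ρₖ)D_Φ(pᵏ, zᵏ) ≤ D_Φ(z*, zᵏ) − (1 − ρ)D_Φ(pᵏ, zᵏ). -/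
open scoped RealInnerProductSpace

/-- Bregman distance generated by `Φ` with gradient map `g`. -/
noncomputable def bregman {E : Type*} [NormedAddCommGroup E] [InnerProductSpace ℝ E]
    (Φ : E → ℝ) (g : E → E) (x y : E) : ℝ :=
  Φ x - Φ y - ⟪g y, x - y⟫

/-- A set-valued operator `T : E ⇉ E` is monotone. -/
def MonotoneOp {E : Type*} [NormedAddCommGroup E] [InnerProductSpace ℝ E]
    (T : E → Set E) : Prop :=
  ∀ ⦃x y x' y' : E⦄, x' ∈ T x → y' ∈ T y → 0 ≤ ⟪x - y, x' - y'⟫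

/-- Fejér monotonicity of the inexact Bregman proximal point algorithm: if `T`
is monotone, `z* ∈ zer T ∩ dom Φ`, `w ∈ T p`, `∇Φ(z') = ∇Φ(z) − σ w`, and
`D_Φ(p, z') ≤ ρₖ D_Φ(p, z)` with `0 ≤ ρₖ ≤ ρ < 1`, then
`D_Φ(z*, z') ≤ D_Φ(z*, z) − σ⟨w, p − z*⟩ − (1 − ρₖ)D_Φ(p, z)
 ≤ D_Φ(z*, z) − (1 − ρ)D_Φ(p, z)`.  (The subgradient inequality hypothesis
encodes convexity of `Φ`, which makes the Bregman distance nonnegative.) -/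
theorem stmt8 {E : Type*} [NormedAddCommGroup E] [InnerProductSpace ℝ E]
    (Φ : E → ℝ) (g : E → E)
    (hsubgrad : ∀ u v : E, Φ v + ⟪g v, u - v⟫ ≤ Φ u)
    (T : E → Set E) (hT : MonotoneOp T)
    (zs : E) (hzs : (0:E) ∈ T zs)
    (σk ρk ρ : ℝ) (hσ : 0 < σk) (hρk0 : 0 ≤ ρk) (hρkρ : ρk ≤ ρ) (hρ : ρ < 1)
    (z z' p w : E) (hw : w ∈ T p)
    (hupd : g z' = g z - σk • w)
    (herr : bregman Φ g p z' ≤ ρk * bregman Φ g p z) :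
    bregman Φ g zs z' ≤
        bregman Φ g zs z - σk * ⟪w, p - zs⟫ - (1 - ρk) * bregman Φ g p z ∧
    bregman Φ g zs z - σk * ⟪w, p - zs⟫ - (1 - ρk) * bregman Φ g p z ≤
        bregman Φ g zs z - (1 - ρ) * bregman Φ g p z := by
  have hD : 0 ≤ bregman Φ g p z := by
    have := hsubgrad p z; simp only [bregman]; linarith
  have hmono : 0 ≤ ⟪w, p - zs⟫ := by
    have := hT hw hzs
    rw [sub_zero] at this
    rwa [real_inner_comm]
  have key : bregman Φ g zs z' =
      bregman Φ g zs z - σk * ⟪w, p - zs⟫ + bregman Φ g p z' - bregman Φ g p z := by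
    simp only [bregman, hupd, inner_sub_left, inner_sub_right, real_inner_smul_left]
    ring
  constructor
  · nlinarith [herr]
  · nlinarith [mul_nonneg (sub_nonneg.2 hρkρ) hD, mul_nonneg hσ.le hmono]
end

section
/- Bregman contraction of the Bregman projection: if Φ is Legendre and C is a closed convex set with C ∩ int(dom Φ) ≠ ∅, then for every y ∈ int(dom Φ), the Bregman projection p = argmin_{x∈C} D_Φ(x,y) is a singleton contained in int(dom Φ) ∩ C, and for every x ∈ dom Φ ∩ C it holds D_Φ(x, p) ≤ D_Φ(x, y) − D_Φ(p, y); in particular p is characterized by ⟨∇Φ(p) − ∇Φ(y), z − p⟩ ≥ 0 for all z ∈ C. -/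
/-!
Minimising `D_Φ(·, y)` is minimising the convex function `Φ - ⟪∇Φ(y), ·⟫`, whose strict
minimum is at `y`; convexity turns this into linear growth away from `y`, so a minimising
sequence `xₙ` in `C ∩ S` is bounded and accumulates at some `p ∈ C ∩ closure S`. If `p` were
on the boundary, then, for `y₀ ∈ C ∩ int S` and `t` of the order of the excess of `xₙ` over
the infimum, the point `(1 - t) xₙ + t y₀` carries a ball of radius of order `t` on which the
function exceeds the infimum by `O(t)`. This bounds the gradient along a sequence tending to
`p`, against essential smoothness. Hence `p ∈ int S`, first-order optimality is the
variational inequality, the three-point identity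
`D(x, p) = D(x, y) - D(p, y) - ⟪∇Φ(p) - ∇Φ(y), x - p⟫` turns it into the contraction, and
strict convexity gives uniqueness.
-/

open scoped RealInnerProductSpace

/-- `Φ` (with domain `S` and gradient map `g` on `int S`) is a Legendre function:
proper (nonempty interior of the domain), convex and lower semicontinuous on `S`,
essentially smooth (differentiable on `int S` with gradient blow-up at the
boundary) and essentially strictly convex. -/
structure IsLegendre {E : Type*} [NormedAddCommGroup E] [InnerProductSpace ℝ E]
    [CompleteSpace E]
    (S : Set E) (Φ : E → ℝ) (g : E → E) : Prop where
  interior_nonempty : (interior S).Nonempty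
  convexOn : ConvexOn ℝ S Φ
  lsc : LowerSemicontinuousOn Φ S
  grad : ∀ x ∈ interior S, HasGradientAt Φ (g x) x
  strictConvexOn : StrictConvexOn ℝ (interior S) Φ
  ess_smooth : ∀ (u : ℕ → E) (zb : E), (∀ n, u n ∈ interior S) → zb ∈ frontier S →
    Filter.Tendsto u Filter.atTop (nhds zb) →
    Filter.Tendsto (fun n => ‖g (u n)‖) Filter.atTop Filter.atTop

open Filter Set Metric Topology

section NormedSpace

variable {E : Type*} [NormedAddCommGroup E] [NormedSpace ℝ E] {S : Set E} {f : E → ℝ}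

theorem ConvexOn.le_of_mem_closedBall_combo (hf : ConvexOn ℝ S f) {x y₀ q : E} {ρ t M : ℝ}
    (hx : x ∈ S) (hball : closedBall y₀ ρ ⊆ S) (hM : ∀ z ∈ closedBall y₀ ρ, f z ≤ M)
    (ht₀ : 0 < t) (ht₁ : t ≤ 1) (hq : q ∈ closedBall ((1 - t) • x + t • y₀) (t * ρ)) :
    q ∈ S ∧ f q ≤ (1 - t) * f x + t * M := by
  set z := y₀ + t⁻¹ • (q - ((1 - t) • x + t • y₀))
  have hz : z ∈ closedBall y₀ ρ := by
    rw [mem_closedBall, dist_eq_norm, add_sub_cancel_left, norm_smul, norm_inv,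
      Real.norm_eq_abs, abs_of_pos ht₀, inv_mul_le_iff₀ ht₀, ← dist_eq_norm]
    exact hq
  have hqz : q = (1 - t) • x + t • z := by
    simp only [z, smul_add, smul_smul, mul_inv_cancel₀ ht₀.ne', one_smul]
    abel
  rw [hqz]
  refine ⟨hf.1 hx (hball hz) (by linarith) ht₀.le (by ring), ?_⟩
  calc f ((1 - t) • x + t • z) ≤ (1 - t) * f x + t * f z :=
        hf.2 hx (hball hz) (by linarith) ht₀.le (by ring)
    _ ≤ (1 - t) * f x + t * M := by gcongr; exact hM z hz

theorem ConvexOn.eq_of_isMinOn_of_le (hf : ConvexOn ℝ S f)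
    (hfs : StrictConvexOn ℝ (interior S) f) {K : Set E} (hK : Convex ℝ K) (hKS : K ⊆ S)
    {p q : E} (hpK : p ∈ K) (hpS : p ∈ interior S) (hmin : IsMinOn f K p) (hq : q ∈ K)
    (hfq : f q ≤ f p) : q = p := by
  set m := (1 / 2 : ℝ) • p + (1 / 2 : ℝ) • q
  have hmK : m ∈ K := hK hpK hq (by norm_num) (by norm_num) (by norm_num)
  have hmS : m ∈ interior S := hf.1.combo_interior_closure_mem_interior hpS
    (subset_closure (hKS hq)) (by norm_num) (by norm_num) (by norm_num)
  have hfm : f m ≤ f p := by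
    have := hf.2 (hKS hpK) (hKS hq) (by norm_num : (0 : ℝ) ≤ 1 / 2)
      (by norm_num : (0 : ℝ) ≤ 1 / 2) (by norm_num)
    simp only [smul_eq_mul] at this
    linarith
  have hKint : IsMinOn f (K ∩ interior S) p := hmin.on_subset inter_subset_left
  have hmp : m = p :=
    (hfs.subset inter_subset_right (hK.inter hf.1.interior)).eq_of_isMinOn
      (fun z hz => hfm.trans (hKint hz)) hKint ⟨hmK, hmS⟩ ⟨hpK, hpS⟩
  have : (2 : ℝ) • m = p + q := by simp only [m, smul_add, smul_smul]; norm_num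
  rw [hmp, two_smul] at this
  exact (add_left_cancel this).symm

theorem ConvexOn.mul_le_of_forall_mem_sphere (hf : ConvexOn ℝ S f) {x y : E} {r δ : ℝ}
    (hy : y ∈ S) (hx : x ∈ S) (hr : 0 < r) (hrx : r ≤ ‖x - y‖)
    (hsphere : ∀ z ∈ sphere y r, f y + δ ≤ f z) : ‖x - y‖ * δ ≤ r * (f x - f y) := by
  have hd : 0 < ‖x - y‖ := hr.trans_le hrx
  set s := r / ‖x - y‖ with hs
  have hs₀ : 0 ≤ s := by positivity
  have hs₁ : s ≤ 1 := div_le_one_of_le₀ hrx hd.le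
  have hz : (1 - s) • y + s • x ∈ sphere y r := by
    rw [mem_sphere, dist_eq_norm,
      show (1 - s) • y + s • x - y = s • (x - y) by rw [smul_sub, sub_smul, one_smul]; abel,
      norm_smul, Real.norm_of_nonneg hs₀, hs, div_mul_cancel₀ _ hd.ne']
  have hconv : f ((1 - s) • y + s • x) ≤ (1 - s) * f y + s * f x :=
    hf.2 hy hx (by linarith) hs₀ (by ring)
  have hδ : δ ≤ s * (f x - f y) := by linarith [hsphere _ hz]
  calc ‖x - y‖ * δ ≤ ‖x - y‖ * (s * (f x - f y)) := by gcongr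
    _ = r * (f x - f y) := by rw [hs]; field_simp

theorem ConvexOn.exists_norm_sub_le_of_isMinOn [ProperSpace E] (hf : ConvexOn ℝ S f)
    (hfs : StrictConvexOn ℝ (interior S) f) (hcont : ContinuousOn f (interior S)) {y : E}
    (hy : y ∈ interior S) (hmin : IsMinOn f S y) (L : ℝ) :
    ∃ R, ∀ x ∈ S, f x ≤ L → ‖x - y‖ ≤ R := by
  obtain ⟨r, hr, hball⟩ := nhds_basis_closedBall.mem_iff.1 (isOpen_interior.mem_nhds hy)
  rcases subsingleton_or_nontrivial E with hE | hE
  · exact ⟨0, fun x _ _ => by simp [Subsingleton.elim x y]⟩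
  have hsphere : sphere y r ⊆ interior S := sphere_subset_closedBall.trans hball
  obtain ⟨z₀, hz₀, hz₀min⟩ := (isCompact_sphere y r).exists_isMinOn
    (NormedSpace.sphere_nonempty.2 hr.le) (hcont.mono hsphere)
  have hgap : f y < f z₀ := by
    by_contra! h
    have := hf.eq_of_isMinOn_of_le hfs hf.1 subset_rfl (interior_subset hy) hy hmin
      (interior_subset (hsphere hz₀)) h
    rw [this, mem_sphere, dist_self] at hz₀
    exact hr.ne hz₀
  refine ⟨max r (r * (L - f y) / (f z₀ - f y)), fun x hx hxL => ?_⟩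
  rcases le_or_gt r ‖x - y‖ with hrx | hrx
  · have := hf.mul_le_of_forall_mem_sphere (interior_subset hy) hx hr hrx (δ := f z₀ - f y)
      (fun z hz => by linarith [isMinOn_iff.1 hz₀min z hz])
    refine le_max_of_le_right ((le_div_iff₀ (by linarith)).2 ?_)
    nlinarith
  · exact le_max_of_le_left hrx.le

end NormedSpace

section InnerProductSpace

variable {E : Type*} [NormedAddCommGroup E] [InnerProductSpace ℝ E]
  {S C : Set E} {f : E → ℝ} {G : E → E} {Φ : E → ℝ} {g : E → E}

def GradientBlowsUpAtFrontier (S : Set E) (G : E → E) : Prop :=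
  ∀ (u : ℕ → E) (zb : E), (∀ n, u n ∈ interior S) → zb ∈ frontier S →
    Tendsto u atTop (𝓝 zb) → Tendsto (fun n => ‖G (u n)‖) atTop atTop

theorem bregman_self (Φ : E → ℝ) (g : E → E) (y : E) : bregman Φ g y y = 0 := by
  simp [bregman]

theorem bregman_eq_bregman_sub_bregman_sub_inner (Φ : E → ℝ) (g : E → E) (x y p : E) :
    bregman Φ g x p = bregman Φ g x y - bregman Φ g p y - ⟪g p - g y, x - p⟫ := by
  simp only [bregman, inner_sub_left, inner_sub_right]
  ring

theorem bregman_left_eq_sub_innerSL_add (Φ : E → ℝ) (g : E → E) (y : E) :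
    (fun x => bregman Φ g x y) = fun x => Φ x - innerSL ℝ (g y) x + (⟪g y, y⟫ - Φ y) := by
  ext x
  simp only [bregman, innerSL_apply_apply, inner_sub_right]
  ring

theorem ConvexOn.bregman_left (hΦ : ConvexOn ℝ S Φ) (g : E → E) (y : E) :
    ConvexOn ℝ S fun x => bregman Φ g x y := by
  rw [bregman_left_eq_sub_innerSL_add]
  exact (hΦ.sub ((innerSL ℝ (g y)).toLinearMap.concaveOn hΦ.1)).add_const _

theorem StrictConvexOn.bregman_left (hΦ : StrictConvexOn ℝ S Φ) (g : E → E) (y : E) :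
    StrictConvexOn ℝ S fun x => bregman Φ g x y := by
  rw [bregman_left_eq_sub_innerSL_add]
  exact (hΦ.sub_concaveOn ((innerSL ℝ (g y)).toLinearMap.concaveOn hΦ.1)).add_const _

variable [CompleteSpace E]

theorem ConvexOn.inner_le_sub_of_hasGradientAt (hf : ConvexOn ℝ S f) {x z G : E}
    (hx : x ∈ S) (hz : z ∈ S) (hG : HasGradientAt f G x) : ⟪G, z - x⟫ ≤ f z - f x := by
  have hline : ConvexOn ℝ (AffineMap.lineMap x z ⁻¹' S) (f ∘ AffineMap.lineMap (k := ℝ) x z) :=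
    hf.comp_affineMap _
  have hderiv : HasDerivAt (f ∘ AffineMap.lineMap (k := ℝ) x z) ⟪G, z - x⟫ 0 := by
    have := hasGradientAt_iff_hasFDerivAt.1 hG
    rw [← AffineMap.lineMap_apply_zero (k := ℝ) x z] at this
    simpa using this.comp_hasDerivAt (0 : ℝ) AffineMap.hasDerivAt_lineMap
  simpa [slope_def_field] using
    hline.le_slope_of_hasDerivAt (by simpa using hx) (by simpa using hz) zero_lt_one hderiv

theorem ConvexOn.mul_norm_le_of_hasGradientAt (hf : ConvexOn ℝ S f) {x G : E} {δ M : ℝ}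
    (hG : HasGradientAt f G x) (hδ : 0 ≤ δ) (hball : closedBall x δ ⊆ S)
    (hM : ∀ q ∈ closedBall x δ, f q ≤ M) : δ * ‖G‖ ≤ M - f x := by
  have hxM := hM x (mem_closedBall_self hδ)
  rcases (norm_nonneg G).eq_or_lt with hG0 | hG0
  · rw [← hG0]
    linarith
  set q := x + (δ / ‖G‖) • G
  have hq : q ∈ closedBall x δ := by
    rw [mem_closedBall, dist_eq_norm, add_sub_cancel_left, norm_smul, Real.norm_eq_abs,
      abs_of_nonneg (by positivity), div_mul_cancel₀ _ hG0.ne']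
  have hinner : ⟪G, q - x⟫ = δ * ‖G‖ := by
    rw [add_sub_cancel_left, real_inner_smul_right, real_inner_self_eq_norm_sq]
    field_simp
  have := hf.inner_le_sub_of_hasGradientAt (hball (mem_closedBall_self hδ)) (hball hq) hG
  linarith [hM q hq]

theorem IsMinOn.inner_nonneg_of_hasGradientAt (hC : Convex ℝ C) {p G : E}
    (hp : p ∈ C ∩ interior S) (hmin : IsMinOn f (C ∩ S) p) (hG : HasGradientAt f G p)
    {z : E} (hz : z ∈ C) : 0 ≤ ⟪G, z - p⟫ := by
  have hloc : IsLocalMinOn f C p :=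
    Filter.mem_of_superset (inter_mem_nhdsWithin C (mem_interior_iff_mem_nhds.1 hp.2))
      fun x hx => hmin hx
  simpa using hloc.hasFDerivWithinAt_nonneg
    (hasGradientAt_iff_hasFDerivAt.1 hG).hasFDerivWithinAt
    (sub_mem_posTangentConeAt_of_segment_subset (hC.segment_subset hp.1 hz))

theorem ConvexOn.mem_interior_and_norm_gradient_le_of_combo (hf : ConvexOn ℝ S f)
    (hG : ∀ x ∈ interior S, HasGradientAt f (G x) x) {x y₀ : E} {ρ t M μ : ℝ}
    (hx : x ∈ S) (hρ : 0 < ρ) (hball : closedBall y₀ ρ ⊆ S)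
    (hM : ∀ z ∈ closedBall y₀ ρ, f z ≤ M) (ht₀ : 0 < t) (ht₁ : t ≤ 1)
    (hμ : μ ≤ f ((1 - t) • x + t • y₀)) (hxt : (1 - t) * (f x - μ) ≤ t) :
    (1 - t) • x + t • y₀ ∈ interior S ∧ ‖G ((1 - t) • x + t • y₀)‖ ≤ (1 + M - μ) / ρ := by
  set v := (1 - t) • x + t • y₀
  have hcone := fun q (hq : q ∈ closedBall v (t * ρ)) =>
    hf.le_of_mem_closedBall_combo hx hball hM ht₀ ht₁ hq
  have hballv : closedBall v (t * ρ) ⊆ S := fun q hq => (hcone q hq).1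
  have hvI : v ∈ interior S := mem_interior_iff_mem_nhds.2 <|
    Filter.mem_of_superset (ball_mem_nhds v (by positivity)) (ball_subset_closedBall.trans hballv)
  have hgrad := hf.mul_norm_le_of_hasGradientAt (hG v hvI) (by positivity) hballv
    (fun q hq => (hcone q hq).2)
  refine ⟨hvI, (le_div_iff₀' hρ).2 (le_of_mul_le_mul_left ?_ ht₀)⟩
  nlinarith

theorem ConvexOn.mem_interior_of_minimizing_seq (hf : ConvexOn ℝ S f)
    (hG : ∀ x ∈ interior S, HasGradientAt f (G x) x) (hblow : GradientBlowsUpAtFrontier S G)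
    (hC : Convex ℝ C) {y₀ : E} (hy₀ : y₀ ∈ C ∩ interior S) {μ : ℝ}
    (hμ : ∀ z ∈ C ∩ S, μ ≤ f z) {x : ℕ → E} {p : E} (hx : ∀ n, x n ∈ C ∩ S)
    (hfx : Tendsto (fun n => f (x n)) atTop (𝓝 μ)) (hxp : Tendsto x atTop (𝓝 p))
    (hp : p ∈ closure S) : p ∈ interior S := by
  by_contra hpI
  have hcont : ContinuousAt f y₀ := (hG y₀ hy₀.2).differentiableAt.continuousAt
  obtain ⟨ρ, hρ, hball⟩ := nhds_basis_closedBall.mem_iff.1 <|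
    inter_mem (isOpen_interior.mem_nhds hy₀.2)
      (hcont.eventually_lt continuousAt_const (lt_add_one (f y₀)))
  -- `t n` is chosen so that `(1 - t n) * (f (x n) - μ) ≤ t n` while `t n → 0`.
  set t : ℕ → ℝ := fun n => min 1 (f (x n) - μ + 1 / (n + 1))
  have ht₀ : ∀ n, 0 < t n := fun n =>
    lt_min one_pos (by linarith [hμ _ (hx n), Nat.one_div_pos_of_nat (α := ℝ) (n := n)])
  have ht₁ : ∀ n, t n ≤ 1 := fun n => min_le_left _ _
  have hxt : ∀ n, (1 - t n) * (f (x n) - μ) ≤ t n := by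
    intro n
    have hxμ := hμ _ (hx n)
    rcases min_choice 1 (f (x n) - μ + 1 / (n + 1)) with h | h
    · rw [show t n = 1 from h, sub_self, zero_mul]
      exact zero_le_one
    · have : t n ≤ f (x n) - μ + 1 / (n + 1) := min_le_right _ _
      nlinarith [Nat.one_div_pos_of_nat (α := ℝ) (n := n), ht₀ n]
  have ht : Tendsto t atTop (𝓝 0) := by
    simpa [t] using (tendsto_const_nhds (x := (1 : ℝ))).min
      ((hfx.sub_const μ).add tendsto_one_div_add_atTop_nhds_zero_nat)
  have hv : Tendsto (fun n => (1 - t n) • x n + t n • y₀) atTop (𝓝 p) := by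
    simpa using (((tendsto_const_nhds (x := (1 : ℝ))).sub ht).smul hxp).add (ht.smul_const y₀)
  have hbound := fun n => hf.mem_interior_and_norm_gradient_le_of_combo hG (hx n).2 hρ
    (fun z hz => interior_subset (hball hz).1) (fun z hz => (hball hz).2.le) (ht₀ n) (ht₁ n)
    (hμ _ ⟨hC (hx n).1 hy₀.1 (by linarith [ht₁ n]) (ht₀ n).le (by ring),
      hf.1 (hx n).2 (interior_subset hy₀.2) (by linarith [ht₁ n]) (ht₀ n).le (by ring)⟩)
    (hxt n)
  obtain ⟨n, hn⟩ := ((hblow _ p (fun n => (hbound n).1) ⟨hp, hpI⟩ hv).eventually_gt_atTop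
    ((1 + (f y₀ + 1) - μ) / ρ)).exists
  exact (hbound n).2.not_gt hn

theorem ConvexOn.exists_isMinOn_mem_interior [ProperSpace E] (hf : ConvexOn ℝ S f)
    (hfs : StrictConvexOn ℝ (interior S) f) (hG : ∀ x ∈ interior S, HasGradientAt f (G x) x)
    (hblow : GradientBlowsUpAtFrontier S G) (hCclosed : IsClosed C) (hC : Convex ℝ C)
    (hne : (C ∩ interior S).Nonempty) {y : E} (hy : y ∈ interior S) (hmin : IsMinOn f S y) :
    ∃ p ∈ C ∩ interior S, IsMinOn f (C ∩ S) p := by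
  have hcont : ContinuousOn f (interior S) := fun x hx =>
    (hG x hx).differentiableAt.continuousAt.continuousWithinAt
  obtain ⟨y₀, hy₀⟩ := hne
  have hne' : (C ∩ S).Nonempty := ⟨y₀, hy₀.1, interior_subset hy₀.2⟩
  have hbdd : BddBelow (f '' (C ∩ S)) := by
    refine ⟨f y, forall_mem_image.2 fun x hx => ?_⟩
    exact hmin hx.2
  have hμ : ∀ z ∈ C ∩ S, sInf (f '' (C ∩ S)) ≤ f z := fun z hz =>
    csInf_le hbdd (mem_image_of_mem f hz)
  obtain ⟨a, ha_anti, ha_lim, ha_mem⟩ :=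
    exists_seq_tendsto_sInf (hne'.image f) hbdd
  choose x hx hfx using ha_mem
  obtain ⟨R, hR⟩ := hf.exists_norm_sub_le_of_isMinOn hfs hcont hy hmin (a 0)
  have hxR : ∀ n, x n ∈ closedBall y R := fun n => by
    rw [mem_closedBall, dist_eq_norm]
    exact hR _ (hx n).2 (hfx n ▸ ha_anti (Nat.zero_le n))
  obtain ⟨p, -, φ, hφ, hxp⟩ := (isCompact_closedBall y R).tendsto_subseq hxR
  have hfxφ : Tendsto (fun n => f (x (φ n))) atTop (𝓝 (sInf (f '' (C ∩ S)))) := by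
    simp only [hfx]
    exact ha_lim.comp hφ.tendsto_atTop
  have hpI : p ∈ interior S := hf.mem_interior_of_minimizing_seq hG hblow hC hy₀ hμ
    (fun n => hx (φ n)) hfxφ hxp
    (mem_closure_of_tendsto hxp (Eventually.of_forall fun n => (hx (φ n)).2))
  have hfp : f p = sInf (f '' (C ∩ S)) := tendsto_nhds_unique
    ((hcont.continuousAt (isOpen_interior.mem_nhds hpI)).tendsto.comp hxp) hfxφ
  exact ⟨p, ⟨hCclosed.mem_of_tendsto hxp (Eventually.of_forall fun n => (hx (φ n)).1), hpI⟩,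
    fun z hz => hfp ▸ hμ z hz⟩

theorem HasGradientAt.bregman_left {x : E} (hΦ : HasGradientAt Φ (g x) x) (y : E) :
    HasGradientAt (fun x => bregman Φ g x y) (g x - g y) x := by
  rw [bregman_left_eq_sub_innerSL_add, hasGradientAt_iff_hasFDerivAt, map_sub]
  exact ((hasGradientAt_iff_hasFDerivAt.1 hΦ).sub (innerSL ℝ (g y)).hasFDerivAt).add_const _

theorem ConvexOn.bregman_nonneg (hΦ : ConvexOn ℝ S Φ) {x y : E} (hx : x ∈ S) (hy : y ∈ S)
    (hgy : HasGradientAt Φ (g y) y) : 0 ≤ bregman Φ g x y := by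
  have := hΦ.inner_le_sub_of_hasGradientAt hy hx hgy
  rw [bregman]
  linarith

theorem IsLegendre.gradientBlowsUpAtFrontier_sub (hleg : IsLegendre S Φ g) (c : E) :
    GradientBlowsUpAtFrontier S fun x => g x - c := fun u zb hu hzb hlim =>
  tendsto_atTop_mono (fun _ => norm_sub_norm_le _ _)
    (tendsto_atTop_add_const_right _ (-‖c‖) (hleg.ess_smooth u zb hu hzb hlim))

end InnerProductSpace

/-- Bregman contraction of the Bregman projection: if `Φ` is Legendre and `C` is
closed convex with `C ∩ int (dom Φ) ≠ ∅`, then for every `y ∈ int (dom Φ)` the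
Bregman projection of `y` onto `C` is a singleton `p ∈ int (dom Φ) ∩ C`, it
satisfies `D_Φ(x, p) ≤ D_Φ(x, y) − D_Φ(p, y)` for every `x ∈ dom Φ ∩ C`, and it
is characterized by `⟨∇Φ(p) − ∇Φ(y), z − p⟩ ≥ 0` for all `z ∈ C`. -/
theorem stmt11 {E : Type*} [NormedAddCommGroup E] [InnerProductSpace ℝ E]
    [FiniteDimensional ℝ E]
    (S : Set E) (Φ : E → ℝ) (g : E → E) (hleg : IsLegendre S Φ g)
    (C : Set E) (hCclosed : IsClosed C) (hCconv : Convex ℝ C)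
    (hne : (C ∩ interior S).Nonempty)
    (y : E) (hy : y ∈ interior S) :
    ∃ p : E,
      (p ∈ C ∩ interior S ∧ ∀ x ∈ C ∩ S, bregman Φ g p y ≤ bregman Φ g x y) ∧
      (∀ x ∈ C ∩ S, bregman Φ g x p ≤ bregman Φ g x y - bregman Φ g p y) ∧
      (∀ z ∈ C, 0 ≤ ⟪g p - g y, z - p⟫) ∧
      (∀ q : E, q ∈ C ∩ S → (∀ x ∈ C ∩ S, bregman Φ g q y ≤ bregman Φ g x y) →
        q = p) := by
  have hD : ConvexOn ℝ S fun x => bregman Φ g x y := hleg.convexOn.bregman_left g y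
  have hDs : StrictConvexOn ℝ (interior S) fun x => bregman Φ g x y :=
    hleg.strictConvexOn.bregman_left g y
  have hDG : ∀ x ∈ interior S, HasGradientAt (fun x => bregman Φ g x y) (g x - g y) x :=
    fun x hx => (hleg.grad x hx).bregman_left y
  have hymin : IsMinOn (fun x => bregman Φ g x y) S y := fun x hx => by
    simpa [bregman_self] using hleg.convexOn.bregman_nonneg hx (interior_subset hy) (hleg.grad y hy)
  obtain ⟨p, hp, hpmin⟩ := hD.exists_isMinOn_mem_interior hDs hDG
    (hleg.gradientBlowsUpAtFrontier_sub (g y)) hCclosed hCconv hne hy hymin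
  have hVI : ∀ z ∈ C, 0 ≤ ⟪g p - g y, z - p⟫ := fun z hz =>
    hpmin.inner_nonneg_of_hasGradientAt hCconv hp (hDG p hp.2) hz
  refine ⟨p, ⟨hp, fun x hx => hpmin hx⟩, fun x hx => ?_, hVI, fun q hq hqmin => ?_⟩
  · rw [bregman_eq_bregman_sub_bregman_sub_inner Φ g x y p]
    linarith [hVI x hx.1]
  · exact hD.eq_of_isMinOn_of_le hDs (hCconv.inter hleg.convexOn.1) inter_subset_right
      ⟨hp.1, interior_subset hp.2⟩ hp.2 hpmin hq (hqmin p ⟨hp.1, interior_subset hp.2⟩)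
end

section
/- Ergodic telescoping bound for the inexact Bregman proximal point method: suppose for each k, ⟨wᵏ, pᵏ − z⟩ ≤ (1/σₖ)(D_Φ(z, zᵏ) − D_Φ(z, z^{k+1}) − (1−ρₖ)D_Φ(pᵏ, zᵏ)) with ρₖ < 1, and let p̆ᴷ = (∑_{k=0}^K σₖ pᵏ)/(∑_{k=0}^K σₖ). Then for every z ∈ dom T ∩ dom Φ and every w ∈ T(z), monotonicity of T yields ⟨w, p̆ᴷ − z⟩ ≤ D_Φ(z, z⁰)/(∑_{k=0}^K σₖ). -/
open scoped RealInnerProductSpace BigOperators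

/-!
Monotonicity of `T` lets us replace `wᵏ` by `w` in the per-step inequality; dropping the
nonnegative term `(1 - ρₖ) D_Φ(pᵏ, zᵏ)` and multiplying by `σₖ` gives
`σₖ ⟪w, pᵏ - z⟫ ≤ D_Φ(z, zᵏ) - D_Φ(z, zᵏ⁺¹)`. Summing telescopes to at most `D_Φ(z, z⁰)`,
and the left side is `(∑ σₖ) ⟪w, p̆ᴷ - z⟫`.
-/

section

variable {E : Type*} [NormedAddCommGroup E] [InnerProductSpace ℝ E]

theorem MonotoneOp.inner_sub_le {T : E → Set E} (hT : MonotoneOp T) {x y x' y' : E}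
    (hx : x' ∈ T x) (hy : y' ∈ T y) : ⟪y', x - y⟫ ≤ ⟪x', x - y⟫ := by
  have h := hT hx hy
  rw [inner_sub_right, real_inner_comm x', real_inner_comm y'] at h
  linarith

theorem MonotoneOp.mul_inner_sub_le_of_step {T : E → Set E} (hT : MonotoneOp T)
    {p zz w wz : E} {σ a b c : ℝ} (hw : w ∈ T p) (hwz : wz ∈ T zz) (hσ : 0 < σ) (hc : 0 ≤ c)
    (hstep : ⟪w, p - zz⟫ ≤ 1 / σ * (a - b - c)) :
    σ * ⟪wz, p - zz⟫ ≤ a - b := by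
  have h := mul_le_mul_of_nonneg_left ((hT.inner_sub_le hw hwz).trans hstep) hσ.le
  rw [← mul_assoc, mul_one_div_cancel hσ.ne', one_mul] at h
  linarith

theorem inner_sum_smul_sub {ι : Type*} (s : Finset ι) (σ : ι → ℝ) (p : ι → E) (v x : E)
    (hs : ∑ i ∈ s, σ i ≠ 0) :
    ⟪v, (∑ i ∈ s, σ i)⁻¹ • (∑ i ∈ s, σ i • p i) - x⟫ =
      (∑ i ∈ s, σ i)⁻¹ * ∑ i ∈ s, σ i * ⟪v, p i - x⟫ := by
  simp only [inner_sub_right, real_inner_smul_right, inner_sum, mul_sub, Finset.sum_sub_distrib,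
    ← Finset.sum_mul]
  field_simp

end

theorem Finset.sum_range_le_of_le_sub_succ {α : Type*} [AddCommGroup α] [PartialOrder α]
    [IsOrderedAddMonoid α] {a d : ℕ → α} (h : ∀ k, a k ≤ d k - d (k + 1)) (hd : ∀ k, 0 ≤ d k)
    (n : ℕ) : ∑ k ∈ Finset.range n, a k ≤ d 0 :=
  calc ∑ k ∈ Finset.range n, a k
      ≤ ∑ k ∈ Finset.range n, (d k - d (k + 1)) := Finset.sum_le_sum fun k _ => h k
    _ = d 0 - d n := Finset.sum_range_sub' d n
    _ ≤ d 0 := sub_le_self _ (hd n)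

/-- Ergodic telescoping bound for the inexact Bregman proximal point method: if
for each `k` and every `z ∈ dom Φ` we have
`⟨wᵏ, pᵏ − z⟩ ≤ (1/σₖ)(D_Φ(z, zᵏ) − D_Φ(z, z^{k+1}) − (1−ρₖ)D_Φ(pᵏ, zᵏ))` with
`ρₖ < 1`, then for the ergodic iterate `p̆ᴷ = (∑_{k≤K} σₖ pᵏ)/(∑_{k≤K} σₖ)`,
every `z ∈ dom T ∩ dom Φ` and every `w ∈ T z` satisfy
`⟨w, p̆ᴷ − z⟩ ≤ D_Φ(z, z⁰)/(∑_{k≤K} σₖ)` by monotonicity of `T`. -/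
theorem stmt14 {E : Type*} [NormedAddCommGroup E] [InnerProductSpace ℝ E]
    (Φ : E → ℝ) (g : E → E)
    (hDnn : ∀ u v : E, 0 ≤ bregman Φ g u v)
    (T : E → Set E) (hT : MonotoneOp T) (SΦ : Set E)
    (z p w : ℕ → E) (σ ρ : ℕ → ℝ) (hσ : ∀ k, 0 < σ k) (hρ : ∀ k, ρ k < 1)
    (hw : ∀ k, w k ∈ T (p k))
    (hstep : ∀ zz ∈ SΦ, ∀ k : ℕ,
      ⟪w k, p k - zz⟫ ≤ (1 / σ k) *
        (bregman Φ g zz (z k) - bregman Φ g zz (z (k + 1)) -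
          (1 - ρ k) * bregman Φ g (p k) (z k)))
    (K : ℕ) :
    ∀ zz ∈ SΦ, ∀ wz ∈ T zz,
      ⟪wz, (∑ k ∈ Finset.range (K + 1), σ k)⁻¹ •
          (∑ k ∈ Finset.range (K + 1), σ k • p k) - zz⟫ ≤
        bregman Φ g zz (z 0) / ∑ k ∈ Finset.range (K + 1), σ k := by
  intro zz hzz wz hwz
  have hS : 0 < ∑ k ∈ Finset.range (K + 1), σ k :=
    Finset.sum_pos (fun k _ => hσ k) Finset.nonempty_range_add_one
  have hweighted (k : ℕ) : σ k * ⟪wz, p k - zz⟫ ≤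
      bregman Φ g zz (z k) - bregman Φ g zz (z (k + 1)) :=
    hT.mul_inner_sub_le_of_step (hw k) hwz (hσ k)
      (mul_nonneg (sub_nonneg.2 (hρ k).le) (hDnn _ _)) (hstep zz hzz k)
  rw [inner_sum_smul_sub _ _ _ _ _ hS.ne', div_eq_inv_mul]
  exact mul_le_mul_of_nonneg_left
    (Finset.sum_range_le_of_le_sub_succ hweighted (fun k => hDnn zz (z k)) (K + 1))
    (inv_nonneg.2 hS.le)
end
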